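/- arXiv:2507.04785 — 7 statements merged into one kernel-verified Lean document; each statement's English description precedes it below -/
import Mathlib

section
/- For every integer p ≥ 2, the least natural number q such that 3·2^q ≥ 4·(p−1) is equal to ⌈log₂(p−1) + log₂(4/3)⌉ (equivalently, ⌈log₂(4(p−1)/3)⌉, the ceiling taken of the real base-2 logarithm). Hence the number of communication rounds of the 123-doubling exclusive scan algorithm, being the least q with skip 3·2^{q−2} ≥ p−1, equals ⌈log₂(p−1) + log₂(4/3)⌉. -/
/-- For every integer `p ≥ 2`, the least natural number `q` with `3·2^q ≥ 4·(p−1)`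
(the round count of the 123-doubling exclusive scan algorithm, whose termination
condition `3·2^{q−2} ≥ p−1` is equivalent over the naturals to `3·2^q ≥ 4(p−1)`)
equals `⌈log₂(p−1) + log₂(4/3)⌉`, the ceiling taken of the real base-2 logarithm. -/
theorem exscan123_round_count (p : ℕ) (hp : 2 ≤ p) (q : ℕ)
    (hq : IsLeast {n : ℕ | 4 * (p - 1) ≤ 3 * 2 ^ n} q) :
    (q : ℤ) = ⌈Real.logb 2 ((p : ℝ) - 1) + Real.logb 2 (4 / 3)⌉ := by
  have hm : 1 ≤ p - 1 := by omega
  have hmR : (1 : ℝ) ≤ ((p - 1 : ℕ) : ℝ) := by exact_mod_cast hm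
  have hmpos : (0 : ℝ) < ((p - 1 : ℕ) : ℝ) := by linarith
  set a : ℝ := 4 * ((p - 1 : ℕ) : ℝ) / 3 with ha
  have hapos : 0 < a := by positivity
  have hsum : Real.logb 2 ((p : ℝ) - 1) + Real.logb 2 (4 / 3) = Real.logb 2 a := by
    have hpe : (p : ℝ) - 1 = ((p - 1 : ℕ) : ℝ) := by
      push_cast [Nat.cast_sub (by omega : 1 ≤ p)]; ring
    rw [hpe, ← Real.logb_mul (by linarith) (by norm_num), ha]; ring_nf
  rw [hsum]
  -- q ≥ 1
  have hq1 : 1 ≤ q := by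
    by_contra h
    have hq0 : q = 0 := by omega
    have h1 := hq.1
    simp only [Set.mem_setOf_eq, hq0, pow_zero] at h1
    omega
  -- upper: a ≤ 2^q
  have hub : a ≤ (2 : ℝ) ^ (q : ℝ) := by
    have h1 : (4 * (p - 1) : ℕ) ≤ (3 * 2 ^ q : ℕ) := hq.1
    have h2 : (4 : ℝ) * ((p - 1 : ℕ) : ℝ) ≤ 3 * 2 ^ q := by exact_mod_cast h1
    rw [Real.rpow_natCast]
    rw [ha]
    linarith
  -- lower: 2^(q-1) < a
  have hlb : (2 : ℝ) ^ ((q : ℝ) - 1) < a := by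
    have hnot : ¬ (4 * (p - 1) ≤ 3 * 2 ^ (q - 1)) := fun h => by
      have := hq.2 h; omega
    have h2 : (3 : ℝ) * 2 ^ (q - 1) < 4 * ((p - 1 : ℕ) : ℝ) := by
      exact_mod_cast Nat.lt_of_not_le hnot
    have hcast : ((q : ℝ) - 1) = ((q - 1 : ℕ) : ℝ) := by
      push_cast [Nat.cast_sub hq1]; ring
    rw [hcast, Real.rpow_natCast, ha]
    linarith
  symm
  rw [Int.ceil_eq_iff]
  constructor
  · have := (Real.lt_logb_iff_rpow_lt (b := 2) (by norm_num) hapos).mpr hlb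
    push_cast
    linarith [this]
  · have := (Real.logb_le_iff_le_rpow (b := 2) (by norm_num) hapos).mpr hub
    push_cast
    linarith [this]
end

section
/- Let M be a monoid (not necessarily commutative), V : ℕ → M, and for natural numbers a, b define P a b = V a * V (a+1) * ⋯ * V (b−1), with P a b = 1 when a ≥ b; ∸ denotes truncated natural subtraction. Define s_k = 3·2^{k−2} for k ≥ 2, and define W : ℕ → ℕ → M by W 2 r = P (r ∸ 3) r, and for k ≥ 2: W (k+1) r = (if r > s_k then W k (r − s_k) * W k r else W k r). Then for every k ≥ 2 and every r ≥ 1: W k r = P (r ∸ s_k) r. -/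
/-- The ordered product `V a * V (a+1) * ⋯ * V (b−1)` over indices in `[a, b)`,
equal to `1` when `a ≥ b`. -/
def orderedProd {M : Type*} [Monoid M] (V : ℕ → M) (a b : ℕ) : M :=
  ((List.range' a (b - a)).map V).prod

lemma orderedProd_mul {M : Type*} [Monoid M] (V : ℕ → M) {a b c : ℕ}
    (hab : a ≤ b) (hbc : b ≤ c) :
    orderedProd V a b * orderedProd V b c = orderedProd V a c := by
  unfold orderedProd
  rw [← List.prod_append, ← List.map_append]
  congr 1
  have h : List.range' a (b - a) ++ List.range' (a + (b - a)) (c - b) = List.range' a ((b - a) + (c - b)) := List.range'_append_1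
  rw [show a + (b - a) = b by omega, show b - a + (c - b) = c - a by omega] at h
  rw [h]

/-- Invariant of the 123-doubling exclusive scan algorithm: with skips
`s_k = 3·2^{k−2}` for `k ≥ 2`, state `W 2 r = P (r ∸ 3) r` and update
`W (k+1) r = W k (r − s_k) * W k r` when `r > s_k` (else unchanged),
after round `k ≥ 2` every processor `r ≥ 1` holds `W k r = P (r ∸ s_k) r`. -/
theorem exscan123_invariant {M : Type*} [Monoid M] (V : ℕ → M) (W : ℕ → ℕ → M)
    (h2 : ∀ r, W 2 r = orderedProd V (r - 3) r)
    (hstep : ∀ k r, 2 ≤ k →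
      W (k + 1) r =
        if 3 * 2 ^ (k - 2) < r then W k (r - 3 * 2 ^ (k - 2)) * W k r else W k r) :
    ∀ k r, 2 ≤ k → 1 ≤ r → W k r = orderedProd V (r - 3 * 2 ^ (k - 2)) r := by
  intro k
  induction k with
  | zero => omega
  | succ k ih =>
    intro r hk hr
    rcases Nat.lt_or_ge k 2 with hk2 | hk2
    · interval_cases k
      · omega
      · simpa using h2 r
    · set s := 3 * 2 ^ (k - 2) with hs
      have hs' : 3 * 2 ^ (k + 1 - 2) = 2 * s := by
        rw [hs]
        have : k + 1 - 2 = (k - 2) + 1 := by omega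
        rw [this, pow_succ]; ring
      rw [hstep k r hk2]
      by_cases h : s < r
      · rw [if_pos h, ih r hk2 hr, ih (r - s) hk2 (by omega), hs']
        have h1 : r - s - s = r - 2 * s := by omega
        rw [h1]
        exact orderedProd_mul V (by omega) (by omega)
      · rw [if_neg h, ih r hk2 hr, hs']
        congr 1
        omega
end

section
/- Let M be a monoid (not necessarily commutative), V : ℕ → M, and for natural numbers a, b define P a b = V a * V (a+1) * ⋯ * V (b−1), with P a b = 1 when a ≥ b; ∸ denotes truncated natural subtraction. Define s_k = 3·2^{k−2} for k ≥ 2, and define W : ℕ → ℕ → M by W 2 r = P (r ∸ 3) r, and for k ≥ 2: W (k+1) r = (if r > s_k then W k (r − s_k) * W k r else W k r). Then for every p ≥ 2 and every q ≥ 2 with 3·2^{q−2} ≥ p − 1, and every r with 1 ≤ r ≤ p − 1: W q r = P 0 r, i.e., processor r holds the exclusive prefix product V 0 * V 1 * ⋯ * V (r−1). -/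
lemma exscan123_inv {M : Type*} [Monoid M] (V : ℕ → M) (W : ℕ → ℕ → M)
    (h2 : ∀ r, W 2 r = orderedProd V (r - 3) r)
    (hstep : ∀ k r, 2 ≤ k →
      W (k + 1) r =
        if 3 * 2 ^ (k - 2) < r then W k (r - 3 * 2 ^ (k - 2)) * W k r else W k r) :
    ∀ k, 2 ≤ k → ∀ r, W k r = orderedProd V (r - 3 * 2 ^ (k - 2)) r := by
  intro k hk
  induction k with
  | zero => omega
  | succ k ih =>
    rcases Nat.lt_or_ge k 2 with h | h
    · interval_cases k
      · omega
      · simpa using h2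
    · intro r
      have ihr := ih h
      rw [hstep k r h]
      have hk2 : k + 1 - 2 = (k - 2) + 1 := by omega
      split_ifs with hlt
      · rw [ihr, ihr]
        have hle1 : r - 3 * 2 ^ (k - 2) - 3 * 2 ^ (k - 2) ≤ r - 3 * 2 ^ (k - 2) :=
          Nat.sub_le _ _
        have hle2 : r - 3 * 2 ^ (k - 2) ≤ r := Nat.sub_le _ _
        rw [orderedProd_mul V hle1 hle2]
        congr 1
        rw [hk2, pow_succ]
        omega
      · rw [ihr]
        congr 1
        rw [hk2, pow_succ]
        have : 2 ^ (k - 2) ≥ 1 := Nat.one_le_two_pow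
        omega

/-- Correctness of the 123-doubling exclusive scan algorithm: with skips
`s_k = 3·2^{k−2}` for `k ≥ 2`, state `W 2 r = P (r ∸ 3) r` and update
`W (k+1) r = W k (r − s_k) * W k r` when `r > s_k` (else unchanged),
for every `p ≥ 2` and every `q ≥ 2` with `3·2^{q−2} ≥ p − 1`, every processor
`1 ≤ r ≤ p − 1` holds its exclusive prefix product `W q r = V 0 * ⋯ * V (r−1)`. -/
theorem exscan123_correct {M : Type*} [Monoid M] (V : ℕ → M) (W : ℕ → ℕ → M)
    (h2 : ∀ r, W 2 r = orderedProd V (r - 3) r)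
    (hstep : ∀ k r, 2 ≤ k →
      W (k + 1) r =
        if 3 * 2 ^ (k - 2) < r then W k (r - 3 * 2 ^ (k - 2)) * W k r else W k r) :
    ∀ p q r, 2 ≤ p → 2 ≤ q → p - 1 ≤ 3 * 2 ^ (q - 2) → 1 ≤ r → r ≤ p - 1 →
      W q r = orderedProd V 0 r := by
  intro p q r hp hq hpq hr1 hrp
  rw [exscan123_inv V W h2 hstep q hq r]
  congr 1
  omega
end

section
/- Let M be a monoid (not necessarily commutative), V : ℕ → M, and for natural numbers a, b define P a b = V a * V (a+1) * ⋯ * V (b−1), with P a b = 1 when a ≥ b; ∸ denotes truncated natural subtraction. Define W : ℕ → ℕ → M by W 0 r = V r, and W (k+1) r = (if r ≥ 2^k then W k (r − 2^k) * W k r else W k r). Then for every k and every r: W k r = P ((r+1) ∸ 2^k) (r+1). -/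
/-- Invariant of the Hillis–Steele (straight doubling) inclusive scan algorithm:
with `W 0 r = V r` and `W (k+1) r = W k (r − 2^k) * W k r` when `r ≥ 2^k` (else
unchanged), before round `k` processor `r` holds `W k r = P ((r+1) ∸ 2^k) (r+1)`. -/
theorem hillis_steele_invariant {M : Type*} [Monoid M] (V : ℕ → M) (W : ℕ → ℕ → M)
    (h0 : ∀ r, W 0 r = V r)
    (hstep : ∀ k r,
      W (k + 1) r = if 2 ^ k ≤ r then W k (r - 2 ^ k) * W k r else W k r) :
    ∀ k r, W k r = orderedProd V ((r + 1) - 2 ^ k) (r + 1) := by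
  intro k
  induction k with
  | zero =>
    intro r
    simp only [pow_zero, h0, orderedProd, Nat.add_sub_cancel]
    simp [List.range'_one]
  | succ k ih =>
    intro r
    rw [hstep]
    split_ifs with h
    · rw [ih, ih]
      have h1 : r - 2 ^ k + 1 = r + 1 - 2 ^ k := by omega
      rw [h1]
      have h2 : r + 1 - 2 ^ k - 2 ^ k = r + 1 - 2 ^ (k + 1) := by
        rw [pow_succ]; omega
      rw [h2]
      have h3 : 2 ^ (k + 1) = 2 ^ k * 2 := pow_succ 2 k
      exact orderedProd_mul V (by omega) (by omega)
    · rw [ih]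
      congr 1
      have h2 : 2 ^ (k + 1) = 2 ^ k * 2 := pow_succ 2 k
      omega
end

section
/- Let M be a monoid (not necessarily commutative), V : ℕ → M, and for natural numbers a, b define P a b = V a * V (a+1) * ⋯ * V (b−1), with P a b = 1 when a ≥ b; ∸ denotes truncated natural subtraction. Define W : ℕ → ℕ → M by W 1 r = P (r ∸ 1) r, and for k ≥ 1: W (k+1) r = (if r > 2^{k−1} then W k (r − 2^{k−1}) * W k r else W k r). Then for every p ≥ 2, every q ≥ 1 with 2^{q−1} ≥ p − 1, and every r with 1 ≤ r ≤ p − 1: W q r = P 0 r. In particular, the 1-doubling exclusive scan completes in 1 + ⌈log₂(p−1)⌉ communication rounds. -/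
lemma onedoubling_inv {M : Type*} [Monoid M] (V : ℕ → M) (W : ℕ → ℕ → M)
    (h1 : ∀ r, W 1 r = orderedProd V (r - 1) r)
    (hstep : ∀ k r, 1 ≤ k →
      W (k + 1) r =
        if 2 ^ (k - 1) < r then W k (r - 2 ^ (k - 1)) * W k r else W k r) :
    ∀ k r, W (k + 1) r = orderedProd V (r - 2 ^ k) r := by
  intro k
  induction k with
  | zero => intro r; simpa using h1 r
  | succ k ih =>
    intro r
    have hs := hstep (k + 1) r (by omega)
    simp only [Nat.add_sub_cancel] at hs
    rw [hs]
    have hp : (2 : ℕ) ^ (k + 1) = 2 ^ k + 2 ^ k := by rw [pow_succ, mul_two]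
    split_ifs with h
    · rw [ih, ih, show r - 2 ^ k - 2 ^ k = r - 2 ^ (k + 1) from by omega]
      exact orderedProd_mul V
        (Nat.sub_le_sub_left (Nat.pow_le_pow_right (by norm_num) (by omega)) r)
        (Nat.sub_le r _)
    · rw [ih]
      congr 1
      omega

/-- Correctness of the 1-doubling exclusive scan algorithm: with
`W 1 r = P (r ∸ 1) r` and, for `k ≥ 1`,
`W (k+1) r = W k (r − 2^{k−1}) * W k r` when `r > 2^{k−1}` (else unchanged),
for every `p ≥ 2` and every `q ≥ 1` with `2^{q−1} ≥ p − 1`, every processor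
`1 ≤ r ≤ p − 1` holds its exclusive prefix product `W q r = V 0 * ⋯ * V (r−1)`;
in particular `1 + ⌈log₂(p−1)⌉` communication rounds suffice. -/
theorem onedoubling_correct {M : Type*} [Monoid M] (V : ℕ → M) (W : ℕ → ℕ → M)
    (h1 : ∀ r, W 1 r = orderedProd V (r - 1) r)
    (hstep : ∀ k r, 1 ≤ k →
      W (k + 1) r =
        if 2 ^ (k - 1) < r then W k (r - 2 ^ (k - 1)) * W k r else W k r) :
    (∀ p q r, 2 ≤ p → 1 ≤ q → p - 1 ≤ 2 ^ (q - 1) → 1 ≤ r → r ≤ p - 1 →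
      W q r = orderedProd V 0 r) ∧
    (∀ p r, 2 ≤ p → 1 ≤ r → r ≤ p - 1 →
      W (1 + Nat.clog 2 (p - 1)) r = orderedProd V 0 r) := by
  have key := onedoubling_inv V W h1 hstep
  constructor
  · intro p q r _ hq hpq _ hr
    rw [show q = (q - 1) + 1 from by omega, key (q - 1) r]
    congr 1
    omega
  · intro p r hp hr hrp
    have hc : p - 1 ≤ 2 ^ Nat.clog 2 (p - 1) := Nat.le_pow_clog (by norm_num) _
    rw [add_comm, key (Nat.clog 2 (p - 1)) r]
    congr 1
    omega
end

section
/- Let M be a monoid (not necessarily commutative), V : ℕ → M, and for natural numbers a, b define P a b = V a * V (a+1) * ⋯ * V (b−1), with P a b = 1 when a ≥ b; ∸ denotes truncated natural subtraction. Define W : ℕ → ℕ → M by W 1 r = P (r ∸ 1) r, and for k ≥ 1: W (k+1) r = (if r ≥ 2^k then (W k (r − 2^k) * V (r − 2^k)) * W k r else W k r). Then for every k ≥ 1 and every r: W k r = P (r ∸ (2^k − 1)) r. -/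
lemma orderedProd_mul_V {M : Type*} [Monoid M] (V : ℕ → M) {a b : ℕ} (hab : a ≤ b) :
    orderedProd V a b * V b = orderedProd V a (b + 1) := by
  have : V b = orderedProd V b (b + 1) := by
    simp [orderedProd]
  rw [this, orderedProd_mul V hab (by omega)]

/-- Invariant of the two-⊕ doubling exclusive scan algorithm: with
`W 1 r = P (r ∸ 1) r` and, for `k ≥ 1`,
`W (k+1) r = (W k (r − 2^k) * V (r − 2^k)) * W k r` when `r ≥ 2^k` (else
unchanged), after round `k ≥ 1` every processor `r` holds
`W k r = P (r ∸ (2^k − 1)) r`. -/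
theorem twoplus_invariant {M : Type*} [Monoid M] (V : ℕ → M) (W : ℕ → ℕ → M)
    (h1 : ∀ r, W 1 r = orderedProd V (r - 1) r)
    (hstep : ∀ k r, 1 ≤ k →
      W (k + 1) r =
        if 2 ^ k ≤ r then (W k (r - 2 ^ k) * V (r - 2 ^ k)) * W k r else W k r) :
    ∀ k r, 1 ≤ k → W k r = orderedProd V (r - (2 ^ k - 1)) r := by
  intro k
  induction k with
  | zero => intro r h; omega
  | succ k ih =>
    intro r _
    rcases Nat.eq_zero_or_pos k with hk | hk
    · subst hk; simpa using h1 r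
    · rw [hstep k r hk]
      split_ifs with hr
      · rw [ih (r - 2 ^ k) hk, ih r hk]
        have h2 : 0 < 2 ^ k := Nat.pow_pos (by norm_num)
        rw [orderedProd_mul_V V (by omega)]
        have he : r - 2 ^ k + 1 = r - (2 ^ k - 1) := by omega
        rw [he, orderedProd_mul V (by omega) (by omega)]
        congr 1
        have : 2 ^ (k + 1) = 2 ^ k + 2 ^ k := by ring
        omega
      · rw [ih r hk]
        have h2 : 0 < 2 ^ k := Nat.pow_pos (by norm_num)
        have : 2 ^ (k + 1) = 2 ^ k + 2 ^ k := by ring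
        congr 1
        omega
end

section
/- For every integer p ≥ 3, let q be the least natural number with 3·2^q ≥ 4·(p−1) (so q = ⌈log₂(p−1) + log₂(4/3)⌉ is the round count of the 123-doubling exclusive scan) and let c = ⌈log₂(p−1)⌉ (the least natural number with 2^c ≥ p−1). Then c ≤ q ≤ c + 1; in particular the 123-doubling algorithm uses at most one round more than the lower bound of ⌈log₂(p−1)⌉ rounds and strictly fewer rounds than the 1 + ⌈log₂(p−1)⌉ rounds of the 1-doubling algorithm whenever q = c. -/
/-- For every `p ≥ 3`, let `q` be the least natural number with `3·2^q ≥ 4·(p−1)`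
(the round count of the 123-doubling exclusive scan) and `c = ⌈log₂(p−1)⌉` the
least natural number with `2^c ≥ p−1` (the lower bound on rounds). Then
`c ≤ q ≤ c + 1`; in particular the 123-doubling algorithm uses at most one round
more than the lower bound, and strictly fewer rounds than the `1 + ⌈log₂(p−1)⌉`
rounds of the 1-doubling algorithm whenever `q = c`. -/
theorem exscan123_rounds_near_optimal (p : ℕ) (hp : 3 ≤ p) (q c : ℕ)
    (hq : IsLeast {n : ℕ | 4 * (p - 1) ≤ 3 * 2 ^ n} q)
    (hc : IsLeast {n : ℕ | p - 1 ≤ 2 ^ n} c) :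
    c ≤ q ∧ q ≤ c + 1 ∧ (q = c → q < 1 + Nat.clog 2 (p - 1)) := by
  obtain ⟨hqmem, hqlb⟩ := hq
  obtain ⟨hcmem, hclb⟩ := hc
  have hcq : c ≤ q := by
    apply hclb
    simp only [Set.mem_setOf_eq] at hqmem ⊢
    omega
  refine ⟨hcq, ?_, ?_⟩
  · apply hqlb
    simp only [Set.mem_setOf_eq] at hcmem ⊢
    rw [pow_succ]
    omega
  · intro hqc
    have h2 : 2 ≤ p - 1 := by omega
    have hclog : c ≤ Nat.clog 2 (p - 1) := hclb (Nat.le_pow_clog one_lt_two _)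
    omega
end
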